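/- Fix d ≥ 1 and α, β ∈ ℝ with α + β > (d-1)/2. Then for all λ, μ ∈ 𝒫_d, the one-layer Cauchy-type identity holds: ∫_{𝒫_d} |λκ^{-1}|^{-β} |μκ^{-1}|^{-α} exp(-tr[κλ^{-1} + κμ^{-1}]) dμ(κ) = ∫_{𝒫_d} |πλ^{-1}|^{-α} |πμ^{-1}|^{-β} exp(-tr[λπ^{-1} + μπ^{-1}]) dμ(π), and both integrals equal Γ_d(α+β) |λ|^α |μ|^β |λ+μ|^{-(α+β)}. -/

import Mathlib

open MeasureTheory ProbabilityTheory Matrix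

noncomputable section

namespace IWPoly

open scoped Classical

/-- The space of `d × d` real matrices. -/
abbrev Mat (d : ℕ) := Matrix (Fin d) (Fin d) ℝ

instance (d : ℕ) : MeasurableSpace (Mat d) :=
  inferInstanceAs (MeasurableSpace (Fin d → Fin d → ℝ))

/-- The symmetric matrix built from a collection of upper-triangular coordinates. -/
def symOfUpper (d : ℕ) (f : {p : Fin d × Fin d // p.1 ≤ p.2} → ℝ) : Mat d :=
  Matrix.of fun i j => if h : i ≤ j then f ⟨(i, j), h⟩ else f ⟨(j, i), le_of_not_ge h⟩

/-- The reference measure `μ` on `𝒫_d`, realized as a measure on all `d × d` matrices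
supported on the set of symmetric positive definite matrices, with density
`|x|^{-(d+1)/2}` with respect to the Lebesgue measure `∏_{i ≤ j} dx_{ij}`. -/
def muM (d : ℕ) : Measure (Mat d) :=
  (((volume : Measure ({p : Fin d × Fin d // p.1 ≤ p.2} → ℝ)).map (symOfUpper d)).restrict
      {x | x.PosDef}).withDensity fun x => ENNReal.ofReal (x.det ^ (-(((d : ℝ) + 1) / 2)))

/-- Square root of a positive semidefinite matrix (junk value `0` otherwise). -/
def msqrt {d : ℕ} (x : Mat d) : Mat d := if h : x.PosSemidef then
  h.1.eigenvectorUnitary.1 * diagonal ((↑) ∘ (√·) ∘ h.1.eigenvalues) *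
    (star h.1.eigenvectorUnitary : Mat d) else 0

/-- The product `x ⋆ y := y^{1/2} x y^{1/2}`. -/
def starProd {d : ℕ} (x y : Mat d) : Mat d := msqrt y * x * msqrt y

/-- The `d`-variate gamma function `Γ_d(θ) = ∫_{𝒫_d} |x|^θ e^{-tr x} dμ(x)`. -/
def GammaD (d : ℕ) (θ : ℝ) : ℝ := ∫ x : Mat d, x.det ^ θ * Real.exp (-x.trace) ∂ muM d

/-- The inverse-Wishart density `P⁻_θ` with respect to `μ`. -/
def Pminus (d : ℕ) (θ : ℝ) (x : Mat d) : ℝ :=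
  (GammaD d θ)⁻¹ * ((x⁻¹).det ^ θ * Real.exp (-(x⁻¹).trace))

/-- The Wishart density `P⁺_θ` with respect to `μ`. -/
def Pplus (d : ℕ) (θ : ℝ) (x : Mat d) : ℝ := Pminus d θ x⁻¹

/-- The inverse-Wishart distribution `Wis⁻¹(θ)`. -/
def invWishart (d : ℕ) (θ : ℝ) : Measure (Mat d) :=
  (muM d).withDensity fun x => ENNReal.ofReal (Pminus d θ x)

/-- The Wishart distribution `Wis(θ)`. -/
def wishart (d : ℕ) (θ : ℝ) : Measure (Mat d) :=
  (muM d).withDensity fun x => ENNReal.ofReal (Pplus d θ x)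

/-- The `d`-variate digamma function `ψ_d = (log Γ_d)'`. -/
def digammaD (d : ℕ) (θ : ℝ) : ℝ := deriv (fun t => Real.log (GammaD d t)) θ

end IWPoly

/-! The measure `μ` is invariant under the congruences `x ↦ g x g` (whose Jacobian in the
coordinates `x_{ij}, i ≤ j`, is `|g|^{d+1}`) and under the inversion `x ↦ x⁻¹` (Jacobian
`|x|^{-(d+1)}`), since in both cases the Jacobian is compensated by the density `|x|^{-(d+1)/2}`.
Substituting `x ↦ a^{-1/2} x a^{-1/2}` gives the Laplace transform
`∫ |x|^θ e^{-tr[xa]} dμ(x) = |a|^{-θ} Γ_d(θ)`. The `κ`-integral is this transform at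
`a = λ⁻¹ + μ⁻¹`, and after `π ↦ π⁻¹` the `π`-integral is it at `a = λ + μ`. -/

namespace IWPoly

instance (d : ℕ) : BorelSpace (Mat d) := inferInstanceAs (BorelSpace (Fin d → Fin d → ℝ))

abbrev UpperIndex (d : ℕ) := {p : Fin d × Fin d // p.1 ≤ p.2}

abbrev Coords (d : ℕ) := UpperIndex d → ℝ

variable {d : ℕ}

variable (d) in
def symOfUpperₗ : Coords d →ₗ[ℝ] Mat d where
  toFun := symOfUpper d
  map_add' f g := by
    ext i j
    simp only [symOfUpper, of_apply, Matrix.add_apply, Pi.add_apply]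
    split <;> rfl
  map_smul' c f := by
    ext i j
    simp only [symOfUpper, of_apply, Matrix.smul_apply, Pi.smul_apply, RingHom.id_apply]
    split <;> rfl

variable (d) in
def upperₗ : Mat d →ₗ[ℝ] Coords d where
  toFun x p := x p.1.1 p.1.2
  map_add' _ _ := rfl
  map_smul' _ _ := rfl

@[simp]
lemma symOfUpperₗ_apply (u : Coords d) : symOfUpperₗ d u = symOfUpper d u := rfl

lemma symOfUpper_apply_of_le (u : Coords d) {i j : Fin d} (h : i ≤ j) :
    symOfUpper d u i j = u ⟨(i, j), h⟩ :=
  dif_pos h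

lemma upperₗ_apply (x : Mat d) (p : UpperIndex d) :
    upperₗ d x p = x p.1.1 p.1.2 := rfl

@[simp]
lemma upperₗ_symOfUpper (u : Coords d) : upperₗ d (symOfUpper d u) = u :=
  funext fun p => symOfUpper_apply_of_le u p.2

lemma isHermitian_symOfUpper (u : Coords d) : (symOfUpper d u).IsHermitian := by
  ext i j
  simp only [conjTranspose_apply, star_trivial, symOfUpper, of_apply]
  rcases lt_trichotomy i j with h | rfl | h
  · simp [h.le, not_le.mpr h]
  · rfl
  · simp [h.le, not_le.mpr h]

lemma symOfUpper_upperₗ {x : Mat d} (hx : x.IsHermitian) : symOfUpper d (upperₗ d x) = x := by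
  ext i j
  by_cases h : i ≤ j
  · exact symOfUpper_apply_of_le _ h
  · simp only [symOfUpper, of_apply, dif_neg h]
    exact hx.apply i j

lemma symOfUpper_injective : Function.Injective (symOfUpper d) :=
  Function.LeftInverse.injective (g := upperₗ d) upperₗ_symOfUpper

lemma continuous_symOfUpper : Continuous (symOfUpper d) :=
  (symOfUpperₗ d).continuous_of_finiteDimensional

lemma measurableEmbedding_symOfUpper : MeasurableEmbedding (symOfUpper d) :=
  ((symOfUpperₗ d).isClosedEmbedding_of_injective
    (LinearMap.ker_eq_bot.mpr symOfUpper_injective)).measurableEmbedding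

variable (d) in
def posDefCoords : Set (Coords d) := {u | (symOfUpper d u).PosDef}

lemma isOpen_setOf_forall_sphere_dotProduct_mulVec_pos :
    IsOpen {A : Mat d | ∀ x ∈ Metric.sphere (0 : Fin d → ℝ) 1, 0 < x ⬝ᵥ (A *ᵥ x)} := by
  refine isOpen_iff_eventually.mpr fun A hA => ?_
  refine (isCompact_sphere 0 1).eventually_forall_of_forall_eventually fun x hx => ?_
  have hcont : Continuous fun p : Mat d × (Fin d → ℝ) => p.2 ⬝ᵥ (p.1 *ᵥ p.2) :=
    continuous_snd.dotProduct (continuous_fst.matrix_mulVec continuous_snd)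
  exact hcont.continuousAt.eventually (lt_mem_nhds (hA x hx))

lemma posDef_iff_forall_sphere {A : Mat d} (hA : A.IsHermitian) :
    A.PosDef ↔ ∀ x ∈ Metric.sphere (0 : Fin d → ℝ) 1, 0 < x ⬝ᵥ (A *ᵥ x) := by
  refine ⟨fun h x hx => ?_, fun h => .of_dotProduct_mulVec_pos hA fun x hx => ?_⟩
  · simpa using h.dotProduct_mulVec_pos (ne_zero_of_mem_unit_sphere ⟨x, hx⟩)
  · have hx' : 0 < ‖x‖ := norm_pos_iff.mpr hx
    have hu : ‖x‖⁻¹ • x ∈ Metric.sphere (0 : Fin d → ℝ) 1 := by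
      simp [norm_smul, hx'.ne']
    have := h _ hu
    rw [smul_dotProduct, mulVec_smul, dotProduct_smul, smul_eq_mul, smul_eq_mul] at this
    simpa using pos_of_mul_pos_right (pos_of_mul_pos_right this (by positivity)) (by positivity)

lemma isOpen_posDefCoords : IsOpen (posDefCoords d) := by
  have : posDefCoords d = symOfUpper d ⁻¹'
      {A | ∀ x ∈ Metric.sphere (0 : Fin d → ℝ) 1, 0 < x ⬝ᵥ (A *ᵥ x)} :=
    Set.ext fun u => posDef_iff_forall_sphere (isHermitian_symOfUpper u)
  rw [this]
  exact isOpen_setOf_forall_sphere_dotProduct_mulVec_pos.preimage continuous_symOfUpper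

def congrCoords (g : Mat d) : Coords d →ₗ[ℝ] Coords d :=
  upperₗ d ∘ₗ (LinearMap.mulLeft ℝ g ∘ₗ LinearMap.mulRight ℝ gᴴ) ∘ₗ symOfUpperₗ d

lemma congrCoords_apply (g : Mat d) (u : Coords d) :
    congrCoords g u = upperₗ d (g * symOfUpper d u * gᴴ) := by
  simp [congrCoords, Matrix.mul_assoc]

lemma symOfUpper_congrCoords (g : Mat d) (u : Coords d) :
    symOfUpper d (congrCoords g u) = g * symOfUpper d u * gᴴ := by
  rw [congrCoords_apply]
  exact symOfUpper_upperₗ (isHermitian_mul_mul_conjTranspose g (isHermitian_symOfUpper u))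

lemma congrCoords_mul (g h : Mat d) : congrCoords (g * h) = congrCoords g ∘ₗ congrCoords h := by
  refine LinearMap.ext fun u => ?_
  rw [LinearMap.comp_apply, congrCoords_apply _ (congrCoords h u), symOfUpper_congrCoords,
    congrCoords_apply, conjTranspose_mul]
  simp only [Matrix.mul_assoc]

@[simp]
lemma congrCoords_one : congrCoords (1 : Mat d) = LinearMap.id := by
  refine LinearMap.ext fun u => ?_
  simp [congrCoords_apply]

lemma prod_upperIndex_mul (v : Fin d → ℝ) :
    ∏ p : UpperIndex d, v p.1.1 * v p.1.2 = (∏ i, v i) ^ (d + 1) := by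
  have hs : ∀ p : Fin d × Fin d, p ∈ Finset.univ.filter (fun p => p.1 ≤ p.2) ↔ p.1 ≤ p.2 := by
    simp
  have hfst : ∏ p : UpperIndex d, v p.1.1 = ∏ i, v i ^ (d - i) := by
    rw [← Finset.prod_subtype _ hs (fun p => v p.1),
      Finset.prod_finset_product _ Finset.univ (fun i => Finset.Ici i) (by simp)]
    simp [Fin.card_Ici]
  have hsnd : ∏ p : UpperIndex d, v p.1.2 = ∏ i, v i ^ (i + 1 : ℕ) := by
    rw [← Finset.prod_subtype _ hs (fun p => v p.2),
      Finset.prod_finset_product_right _ Finset.univ (fun j => Finset.Iic j) (by simp)]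
    simp [Fin.card_Iic]
  rw [Finset.prod_mul_distrib, hfst, hsnd, ← Finset.prod_mul_distrib, ← Finset.prod_pow]
  refine Finset.prod_congr rfl fun i _ => ?_
  rw [← pow_add]
  congr 1
  omega

lemma det_congrCoords_diagonal (v : Fin d → ℝ) :
    LinearMap.det (congrCoords (diagonal v)) = (diagonal v).det ^ (d + 1) := by
  have : congrCoords (diagonal v) = toLin' (diagonal fun p => v p.1.1 * v p.1.2) := by
    refine LinearMap.ext fun u => ?_
    funext p
    rw [congrCoords_apply, toLin'_apply, mulVec_diagonal, diagonal_conjTranspose, star_trivial]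
    rw [upperₗ_apply, mul_diagonal, diagonal_mul, symOfUpper_apply_of_le u p.2]
    ring
  rw [this, LinearMap.det_toLin', det_diagonal, det_diagonal, prod_upperIndex_mul]

lemma det_congrCoords_of_isHermitian {g : Mat d} (hg : g.IsHermitian) :
    LinearMap.det (congrCoords g) = g.det ^ (d + 1) := by
  set U : Mat d := (hg.eigenvectorUnitary : Mat d)
  have hU : U * star U = 1 := mem_unitaryGroup_iff.mp hg.eigenvectorUnitary.2
  have hspec : g = U * diagonal (RCLike.ofReal ∘ hg.eigenvalues) * star U := hg.spectral_theorem
  have hdetU : LinearMap.det (congrCoords U) * LinearMap.det (congrCoords (star U)) = 1 := by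
    rw [← LinearMap.det_comp, ← congrCoords_mul, hU, congrCoords_one, LinearMap.det_id]
  have hdetU' : U.det ^ (d + 1) * (star U).det ^ (d + 1) = 1 := by
    rw [← mul_pow, ← det_mul, hU, det_one, one_pow]
  rw [hspec, congrCoords_mul, congrCoords_mul, LinearMap.det_comp, LinearMap.det_comp, det_mul,
    det_mul, det_congrCoords_diagonal]
  linear_combination (diagonal (RCLike.ofReal ∘ hg.eigenvalues) : Mat d).det ^ (d + 1) * hdetU
    - (diagonal (RCLike.ofReal ∘ hg.eigenvalues) : Mat d).det ^ (d + 1) * hdetU'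

lemma det_nonsing_inv' (x : Mat d) : x⁻¹.det = x.det⁻¹ := by
  rw [det_nonsing_inv, Ring.inverse_eq_inv]

variable (d) in
def muDensity (x : Mat d) : ℝ := x.det ^ (-(((d : ℝ) + 1) / 2))

lemma muDensity_nonneg {x : Mat d} (hx : x.PosDef) : 0 ≤ muDensity d x :=
  Real.rpow_nonneg hx.det_pos.le _

lemma integral_muM (f : Mat d → ℝ) :
    ∫ x, f x ∂muM d =
      ∫ u in posDefCoords d, muDensity d (symOfUpper d u) * f (symOfUpper d u) := by
  have hmeas : Measurable (muDensity d) := continuous_id.matrix_det.measurable.pow_const _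
  rw [muM, show (fun x : Mat d => ENNReal.ofReal (x.det ^ (-(((d : ℝ) + 1) / 2)))) =
      fun x => ((muDensity d x).toNNReal : ENNReal) from rfl,
    integral_withDensity_eq_integral_smul hmeas.real_toNNReal,
    measurableEmbedding_symOfUpper.restrict_map, measurableEmbedding_symOfUpper.integral_map]
  refine setIntegral_congr_fun isOpen_posDefCoords.measurableSet fun u hu => ?_
  rw [NNReal.smul_def, smul_eq_mul, Real.coe_toNNReal _ (muDensity_nonneg hu)]

lemma integral_muM_congr {f g : Mat d → ℝ} (h : ∀ x : Mat d, x.PosDef → f x = g x) :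
    ∫ x, f x ∂muM d = ∫ x, g x ∂muM d := by
  rw [integral_muM, integral_muM]
  exact setIntegral_congr_fun isOpen_posDefCoords.measurableSet fun u hu => by
    simp only [h _ hu]

lemma abs_pow_succ_mul_sq_mul_rpow {c D : ℝ} (hc : c ≠ 0) (hD : 0 < D) (d : ℕ) :
    |c| ^ (d + 1) * (c ^ 2 * D) ^ (-(((d : ℝ) + 1) / 2)) = D ^ (-(((d : ℝ) + 1) / 2)) := by
  have hc' : 0 < |c| := abs_pos.mpr hc
  rw [Real.mul_rpow (sq_nonneg c) hD.le, ← sq_abs, ← Real.rpow_natCast |c| 2,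
    ← Real.rpow_mul hc'.le, ← mul_assoc, ← Real.rpow_natCast |c| (d + 1), ← Real.rpow_add hc',
    show ((d + 1 : ℕ) : ℝ) + ((2 : ℕ) : ℝ) * -(((d : ℝ) + 1) / 2) = 0 by push_cast; ring,
    Real.rpow_zero, one_mul]

lemma integral_muM_comp_of_bijOn {F : Mat d → Mat d} {φ : Coords d → Coords d}
    {φ' : Coords d → Coords d →L[ℝ] Coords d}
    (hφ' : ∀ u ∈ posDefCoords d, HasFDerivWithinAt φ (φ' u) (posDefCoords d) u)
    (hbij : Set.BijOn φ (posDefCoords d) (posDefCoords d))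
    (hF : ∀ u ∈ posDefCoords d, symOfUpper d (φ u) = F (symOfUpper d u))
    (hjac : ∀ u ∈ posDefCoords d,
      |(φ' u).det| * muDensity d (F (symOfUpper d u)) = muDensity d (symOfUpper d u))
    (f : Mat d → ℝ) :
    ∫ x, f (F x) ∂muM d = ∫ x, f x ∂muM d := by
  rw [integral_muM, integral_muM]
  conv_rhs => rw [← hbij.image_eq, integral_image_eq_integral_abs_det_fderiv_smul volume
    isOpen_posDefCoords.measurableSet hφ' hbij.injOn]
  refine setIntegral_congr_fun isOpen_posDefCoords.measurableSet fun u hu => ?_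
  rw [smul_eq_mul, hF u hu, ← mul_assoc, hjac u hu]

lemma posDef_mul_mul_conjTranspose {x : Mat d} (hx : x.PosDef) {g : Mat d} (hg : IsUnit g.det) :
    (g * x * gᴴ).PosDef :=
  hx.mul_mul_conjTranspose_same (vecMul_injective_iff_isUnit.mpr ((isUnit_iff_isUnit_det g).mpr hg))

lemma bijOn_congrCoords {g : Mat d} (hg : IsUnit g.det) :
    Set.BijOn (congrCoords g) (posDefCoords d) (posDefCoords d) := by
  have hmaps : ∀ {g : Mat d}, IsUnit g.det →
      Set.MapsTo (congrCoords g) (posDefCoords d) (posDefCoords d) := fun hg u hu => by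
    show (symOfUpper d _).PosDef
    simpa only [symOfUpper_congrCoords] using posDef_mul_mul_conjTranspose hu hg
  have hinv : ∀ {g h : Mat d}, g * h = 1 → ∀ u, congrCoords g (congrCoords h u) = u :=
    fun hgh u => by rw [← LinearMap.comp_apply, ← congrCoords_mul, hgh, congrCoords_one]; rfl
  refine Set.InvOn.bijOn ⟨fun u _ => hinv (nonsing_inv_mul g hg) u,
    fun u _ => hinv (mul_nonsing_inv g hg) u⟩ (hmaps hg) (hmaps ?_)
  rw [det_nonsing_inv']
  exact hg.inv

lemma integral_muM_comp_mul_mul {g : Mat d} (hg : g.IsHermitian) (hg' : IsUnit g.det)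
    (f : Mat d → ℝ) : ∫ x, f (g * x * g) ∂muM d = ∫ x, f x ∂muM d := by
  refine integral_muM_comp_of_bijOn (φ := congrCoords g)
    (fun u _ => (LinearMap.toContinuousLinearMap (congrCoords g)).hasFDerivAt.hasFDerivWithinAt)
    (bijOn_congrCoords hg') (fun u _ => by rw [symOfUpper_congrCoords, hg.eq]) (fun u hu => ?_) f
  rw [LinearMap.det_toContinuousLinearMap, det_congrCoords_of_isHermitian hg, abs_pow, muDensity,
    muDensity, det_mul, det_mul, show g.det * (symOfUpper d u).det * g.det =
      g.det ^ 2 * (symOfUpper d u).det by ring]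
  exact abs_pow_succ_mul_sq_mul_rpow hg'.ne_zero hu.det_pos d

section Inversion

-- `hasFDerivAt_ringInverse` needs a normed ring structure on matrices; any norm will do.
attribute [local instance] Matrix.linftyOpNormedAddCommGroup Matrix.linftyOpNormedRing
  Matrix.linftyOpNormedAlgebra

variable (d) in
def invCoords (u : Coords d) : Coords d := upperₗ d (symOfUpper d u)⁻¹

lemma symOfUpper_invCoords {u : Coords d} (hu : u ∈ posDefCoords d) :
    symOfUpper d (invCoords d u) = (symOfUpper d u)⁻¹ :=
  symOfUpper_upperₗ (PosDef.isHermitian hu).inv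

lemma hasFDerivAt_invCoords {u : Coords d} (hu : u ∈ posDefCoords d) :
    HasFDerivAt (invCoords d)
      (LinearMap.toContinuousLinearMap (-congrCoords (symOfUpper d u)⁻¹)) u := by
  set x := symOfUpper d u
  have hx : IsUnit x := (isUnit_iff_isUnit_det x).mpr (PosDef.det_pos hu).ne'.isUnit
  have hinv := ((LinearMap.toContinuousLinearMap (upperₗ d)).hasFDerivAt.comp u
    ((hasFDerivAt_ringInverse (𝕜 := ℝ) hx.unit).comp u
      (LinearMap.toContinuousLinearMap (symOfUpperₗ d)).hasFDerivAt))
  have hfun : (upperₗ d ∘ Ring.inverse ∘ symOfUpperₗ d : Coords d → Coords d) = invCoords d := by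
    funext v
    simp [invCoords, nonsing_inv_eq_ringInverse]
  have hder : LinearMap.toContinuousLinearMap (upperₗ d) ∘L
      (-ContinuousLinearMap.mulLeftRight ℝ (Mat d) x⁻¹ x⁻¹) ∘L
        LinearMap.toContinuousLinearMap (symOfUpperₗ d) =
      LinearMap.toContinuousLinearMap (-congrCoords x⁻¹) := by
    refine ContinuousLinearMap.ext fun v => ?_
    rw [LinearMap.coe_toContinuousLinearMap', LinearMap.neg_apply, congrCoords_apply,
      (PosDef.isHermitian hu).inv.eq]
    show upperₗ d (-(x⁻¹ * symOfUpper d v * x⁻¹)) = _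
    rw [map_neg]
  have hxinv : (↑hx.unit⁻¹ : Mat d) = x⁻¹ := by
    rw [nonsing_inv_eq_ringInverse, ← Ring.inverse_unit, IsUnit.unit_spec]
  rw [← hfun, ← hder, ← hxinv]
  exact hinv

end Inversion

lemma invCoords_invCoords {u : Coords d} (hu : u ∈ posDefCoords d) :
    invCoords d (invCoords d u) = u := by
  rw [invCoords, symOfUpper_invCoords hu,
    nonsing_inv_nonsing_inv _ (PosDef.det_pos hu).ne'.isUnit, upperₗ_symOfUpper]

lemma bijOn_invCoords : Set.BijOn (invCoords d) (posDefCoords d) (posDefCoords d) := by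
  have hmaps : Set.MapsTo (invCoords d) (posDefCoords d) (posDefCoords d) := fun u hu => by
    show (symOfUpper d _).PosDef
    rw [symOfUpper_invCoords hu]
    exact PosDef.inv hu
  exact Set.InvOn.bijOn ⟨fun _ => invCoords_invCoords, fun _ => invCoords_invCoords⟩ hmaps hmaps

lemma integral_muM_comp_inv (f : Mat d → ℝ) : ∫ x, f x⁻¹ ∂muM d = ∫ x, f x ∂muM d := by
  refine integral_muM_comp_of_bijOn (fun u hu => (hasFDerivAt_invCoords hu).hasFDerivWithinAt)
    bijOn_invCoords (fun u hu => symOfUpper_invCoords hu) (fun u hu => ?_) f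
  have hx : 0 < (symOfUpper d u).det := PosDef.det_pos hu
  rw [LinearMap.det_toContinuousLinearMap, ← neg_one_smul ℝ, LinearMap.det_smul, abs_mul,
    abs_pow, abs_neg, abs_one, one_pow, one_mul, det_congrCoords_of_isHermitian
    (PosDef.isHermitian hu).inv, abs_pow, muDensity, muDensity, det_nonsing_inv']
  simpa [sq, hx.ne'] using abs_pow_succ_mul_sq_mul_rpow (inv_ne_zero hx.ne') hx d

open scoped MatrixOrder in
lemma integral_muM_det_rpow_mul_exp_neg_trace_mul (θ : ℝ) {a : Mat d} (ha : a.PosDef) :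
    ∫ x, x.det ^ θ * Real.exp (-(x * a).trace) ∂muM d = a.det ^ (-θ) * GammaD d θ := by
  set s : Mat d := CFC.sqrt a⁻¹
  have hs : s.IsHermitian := (nonneg_iff_posSemidef.mp (CFC.sqrt_nonneg _)).1
  have hss : s * s = a⁻¹ := CFC.sqrt_mul_sqrt_self a⁻¹ (nonneg_iff_posSemidef.mpr ha.inv.posSemidef)
  have hdet : s.det * s.det = a.det⁻¹ := by
    rw [← det_mul, hss, det_nonsing_inv']
  have hs' : IsUnit s.det := (mul_self_ne_zero.mp (hdet ▸ inv_ne_zero ha.det_pos.ne')).isUnit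
  have hsas : s * a * s = 1 := by
    rw [← (isUnit_iff_isUnit_det s).mpr hs' |>.mul_left_inj, Matrix.mul_assoc, hss,
      Matrix.mul_assoc, mul_nonsing_inv _ ha.det_pos.ne'.isUnit, Matrix.mul_one, Matrix.one_mul]
  calc ∫ x, x.det ^ θ * Real.exp (-(x * a).trace) ∂muM d
      = ∫ x, (s * x * s).det ^ θ * Real.exp (-(s * x * s * a).trace) ∂muM d :=
        (integral_muM_comp_mul_mul hs hs' _).symm
    _ = ∫ x, a.det ^ (-θ) * (x.det ^ θ * Real.exp (-x.trace)) ∂muM d := by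
        refine integral_muM_congr fun x hx => ?_
        have htr : (s * x * s * a).trace = x.trace := by
          rw [Matrix.mul_assoc (s * x), trace_mul_cycle, hsas, Matrix.one_mul]
        rw [htr, det_mul, det_mul, mul_right_comm, hdet, Real.mul_rpow (inv_pos.mpr ha.det_pos).le
          hx.det_pos.le, Real.inv_rpow ha.det_pos.le, ← Real.rpow_neg ha.det_pos.le, mul_assoc]
    _ = a.det ^ (-θ) * GammaD d θ := integral_const_mul _ _

lemma det_inv_add_inv {l m : Mat d} (hl : l.PosDef) (hm : m.PosDef) :
    (l⁻¹ + m⁻¹).det = (l + m).det / (l.det * m.det) := by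
  have hlm : l⁻¹ + m⁻¹ = l⁻¹ * (l + m) * m⁻¹ := by
    rw [Matrix.mul_add, Matrix.add_mul, nonsing_inv_mul _ hl.det_pos.ne'.isUnit, Matrix.one_mul,
      Matrix.mul_assoc, mul_nonsing_inv _ hm.det_pos.ne'.isUnit, Matrix.mul_one, add_comm]
  rw [hlm, det_mul, det_mul, det_nonsing_inv', det_nonsing_inv']
  field_simp

lemma rpow_neg_mul_rpow_neg_mul_div_rpow {L M S : ℝ} (hL : 0 < L) (hM : 0 < M) (hS : 0 < S)
    (α β : ℝ) :
    L ^ (-β) * M ^ (-α) * (S / (L * M)) ^ (-(α + β)) = L ^ α * M ^ β * S ^ (-(α + β)) := by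
  have hLα : L ^ α = L ^ (-β) / L ^ (-(α + β)) := by rw [← Real.rpow_sub hL]; ring_nf
  have hMβ : M ^ β = M ^ (-α) / M ^ (-(α + β)) := by rw [← Real.rpow_sub hM]; ring_nf
  rw [hLα, hMβ, Real.div_rpow hS.le (by positivity), Real.mul_rpow hL.le hM.le]
  ring

lemma integral_muM_cauchy_left (α β : ℝ) {l m : Mat d} (hl : l.PosDef) (hm : m.PosDef) :
    ∫ κ : Mat d, (l * κ⁻¹).det ^ (-β) * (m * κ⁻¹).det ^ (-α) *
        Real.exp (-((κ * l⁻¹).trace + (κ * m⁻¹).trace)) ∂muM d =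
      GammaD d (α + β) * l.det ^ α * m.det ^ β * (l + m).det ^ (-(α + β)) := by
  calc _ = ∫ κ : Mat d, (l.det ^ (-β) * m.det ^ (-α)) *
        (κ.det ^ (α + β) * Real.exp (-(κ * (l⁻¹ + m⁻¹)).trace)) ∂muM d := by
        refine integral_muM_congr fun κ hκ => ?_
        have hK := hκ.det_pos
        have hdet : ∀ {n : Mat d}, n.PosDef → ∀ γ : ℝ,
            (n * κ⁻¹).det ^ (-γ) = n.det ^ (-γ) * κ.det ^ γ := fun hn γ => by
          rw [det_mul, det_nonsing_inv', Real.mul_rpow hn.det_pos.le (by positivity),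
            Real.inv_rpow hK.le, Real.rpow_neg hK.le, inv_inv]
        rw [hdet hl, hdet hm, Matrix.mul_add, trace_add, Real.rpow_add hK]
        ring
    _ = (l.det ^ (-β) * m.det ^ (-α)) * ((l⁻¹ + m⁻¹).det ^ (-(α + β)) * GammaD d (α + β)) := by
        rw [integral_const_mul,
          integral_muM_det_rpow_mul_exp_neg_trace_mul _ (hl.inv.add hm.inv)]
    _ = _ := by
        rw [det_inv_add_inv hl hm, ← mul_assoc, rpow_neg_mul_rpow_neg_mul_div_rpow hl.det_pos
          hm.det_pos (hl.add hm).det_pos]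
        ring

lemma integral_muM_cauchy_right (α β : ℝ) {l m : Mat d} (hl : l.PosDef) (hm : m.PosDef) :
    ∫ π : Mat d, (π * l⁻¹).det ^ (-α) * (π * m⁻¹).det ^ (-β) *
        Real.exp (-((l * π⁻¹).trace + (m * π⁻¹).trace)) ∂muM d =
      GammaD d (α + β) * l.det ^ α * m.det ^ β * (l + m).det ^ (-(α + β)) := by
  rw [← integral_muM_comp_inv]
  calc _ = ∫ π : Mat d, (l.det ^ α * m.det ^ β) *
        (π.det ^ (α + β) * Real.exp (-(π * (l + m)).trace)) ∂muM d := by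
        refine integral_muM_congr fun π hπ => ?_
        have hP := hπ.det_pos
        have hdet : ∀ {n : Mat d}, n.PosDef → ∀ γ : ℝ,
            (π⁻¹ * n⁻¹).det ^ (-γ) = π.det ^ γ * n.det ^ γ := fun hn γ => by
          rw [det_mul, det_nonsing_inv', det_nonsing_inv', ← mul_inv,
            Real.inv_rpow (mul_pos hP hn.det_pos).le, Real.rpow_neg (mul_pos hP hn.det_pos).le,
            inv_inv, Real.mul_rpow hP.le hn.det_pos.le]
        rw [nonsing_inv_nonsing_inv _ hP.ne'.isUnit, hdet hl, hdet hm, trace_mul_comm l,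
          trace_mul_comm m, ← trace_add, ← Matrix.mul_add, Real.rpow_add hP]
        ring
    _ = _ := by
        rw [integral_const_mul, integral_muM_det_rpow_mul_exp_neg_trace_mul _ (hl.add hm)]
        ring

end IWPoly

open IWPoly in
theorem statement18_general (d : ℕ) (α β : ℝ)
    (l m : Mat d) (hl : l.PosDef) (hm : m.PosDef) :
    (∫ κ : Mat d,
        (l * κ⁻¹).det ^ (-β) * (m * κ⁻¹).det ^ (-α) *
          Real.exp (-((κ * l⁻¹).trace + (κ * m⁻¹).trace)) ∂ muM d) =
      GammaD d (α + β) * l.det ^ α * m.det ^ β * (l + m).det ^ (-(α + β)) ∧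
    (∫ π : Mat d,
        (π * l⁻¹).det ^ (-α) * (π * m⁻¹).det ^ (-β) *
          Real.exp (-((l * π⁻¹).trace + (m * π⁻¹).trace)) ∂ muM d) =
      GammaD d (α + β) * l.det ^ α * m.det ^ β * (l + m).det ^ (-(α + β)) :=
  ⟨integral_muM_cauchy_left α β hl hm, integral_muM_cauchy_right α β hl hm⟩

open IWPoly in
/-- One-layer Cauchy-type identity: for `α + β > (d-1)/2` and
`λ, μ ∈ 𝒫_d`, both integrals
`∫ |λκ⁻¹|^{-β} |μκ⁻¹|^{-α} e^{-tr[κλ⁻¹ + κμ⁻¹]} dμ(κ)` and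
`∫ |πλ⁻¹|^{-α} |πμ⁻¹|^{-β} e^{-tr[λπ⁻¹ + μπ⁻¹]} dμ(π)` equal
`Γ_d(α+β) |λ|^α |μ|^β |λ+μ|^{-(α+β)}`. -/
theorem statement18 (d : ℕ) (hd : 1 ≤ d) (α β : ℝ) (h : ((d : ℝ) - 1) / 2 < α + β)
    (l m : Mat d) (hl : l.PosDef) (hm : m.PosDef) :
    (∫ κ : Mat d,
        (l * κ⁻¹).det ^ (-β) * (m * κ⁻¹).det ^ (-α) *
          Real.exp (-((κ * l⁻¹).trace + (κ * m⁻¹).trace)) ∂ muM d) =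
      GammaD d (α + β) * l.det ^ α * m.det ^ β * (l + m).det ^ (-(α + β)) ∧
    (∫ π : Mat d,
        (π * l⁻¹).det ^ (-α) * (π * m⁻¹).det ^ (-β) *
          Real.exp (-((l * π⁻¹).trace + (m * π⁻¹).trace)) ∂ muM d) =
      GammaD d (α + β) * l.det ^ α * m.det ^ β * (l + m).det ^ (-(α + β)) :=
  statement18_general d α β l m hl hm
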